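/- Let L be a frame and let U ⊆ LC(L) be a nonempty upper set. With φ(V) = {(a,b) ∈ LC(L) | c(a) ∩ o(b) ⊆ V} and ψ(U) = ⋁_{(c,d)∈U} c(c) ∩ o(d), one has φ(ψ(U)) = A(U) = {⋀F | F ⊆ U, F locally exact}, i.e., the closure of U to the least admissible upper set is computed in one step by taking meets of locally exact subfamilies. -/
import Mathlib


open Set

variable {L : Type*} [Order.Frame L]

/-- The open sublocale determined by `a`. -/
def Opn (a : L) : Set L := Set.range (a ⇨ ·)

/-- A sublocale: a subset closed under all meets and under `a ⇨ (-)`. -/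
def IsSublocale (S : Set L) : Prop :=
  (∀ T ⊆ S, sInf T ∈ S) ∧ ∀ a : L, ∀ s ∈ S, a ⇨ s ∈ S

/-- Join of two sublocales in the coframe of sublocales. -/
def SJoin2 (S T : Set L) : Set L := {x | ∃ M ⊆ S ∪ T, sInf M = x}

/-- The supplement (co-pseudocomplement) of a sublocale: the least sublocale `T`
with `S ∨ T = L`. -/
def Supp (S : Set L) : Set L := ⋂₀ {T | IsSublocale T ∧ SJoin2 S T = Set.univ}

/-- The frame surjection onto a sublocale. -/
def nu (T : Set L) (a : L) : L := sInf {t ∈ T | a ≤ t}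

/-- Canonical representations of locally closed sublocales. -/
def LCset (L : Type*) [Order.Frame L] : Set (L × L) :=
  {p | p.1 ≤ p.2 ∧ p.2 ⇨ p.1 = p.1}

/-- The canonical-representation map `lc`. -/
def lc (p : L × L) : L × L := (p.2 ⇨ p.1, (p.2 ⇨ p.1) ⊔ p.2)

/-- The order on `LCset L`: `(x,y) ⊑ (a,b)` iff `x ≤ a` and `b ≤ a ∨ y`. -/
def LCle (p q : L × L) : Prop := p.1 ≤ q.1 ∧ q.2 ≤ q.1 ⊔ p.2

/-- The join in `LCset L`. -/
def lcSup (p q : L × L) : L × L := lc (p.1 ⊔ q.1, p.2 ⊓ q.2)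

/-- The join in the coframe of sublocales of a family of locally closed sublocales. -/
def SJoinP (U : Set (L × L)) : Set L :=
  {x | ∃ M ⊆ ⋃ p ∈ U, Set.Ici p.1 ∩ Opn p.2, sInf M = x}

/-- `m` is the greatest lower bound of `F` in the poset `(LCset L, LCle)`. -/
def lcIsGLB (F : Set (L × L)) (m : L × L) : Prop :=
  m ∈ LCset L ∧ (∀ p ∈ F, LCle m p) ∧
    ∀ q ∈ LCset L, (∀ p ∈ F, LCle q p) → LCle q m

/-- `F` is an admissible family in the join-semilattice `LCset L`, with meet `m`:
the meet exists and distributes over binary joins. -/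
def lcAdmissible (F : Set (L × L)) (m : L × L) : Prop :=
  lcIsGLB F m ∧ ∀ b ∈ LCset L, lcIsGLB ((fun p => lcSup b p) '' F) (lcSup b m)

/-- Admissible upper sets of the join-semilattice `LCset L`. -/
def lcAUS (L : Type*) [Order.Frame L] (U : Set (L × L)) : Prop :=
  U.Nonempty ∧ U ⊆ LCset L ∧
    (∀ p ∈ U, ∀ q ∈ LCset L, LCle p q → q ∈ U) ∧
    ∀ F ⊆ U, ∀ m, lcAdmissible F m → m ∈ U

-- auxiliary
def SOf (p : L × L) : Set L := Set.Ici p.1 ∩ Opn p.2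

lemma himp_left_comm' (a b c : L) : a ⇨ (b ⇨ c) = b ⇨ (a ⇨ c) := by
  rw [himp_himp, himp_himp, inf_comm]

lemma himp_himp_self (a c : L) : a ⇨ (a ⇨ c) = a ⇨ c := by
  rw [himp_himp, inf_idem]

lemma mem_Opn {a x : L} : x ∈ Opn a ↔ a ⇨ x = x := by
  constructor
  · rintro ⟨y, rfl⟩; exact himp_himp_self a y
  · intro h; exact ⟨x, h⟩

lemma mem_SOf {p : L × L} {x : L} : x ∈ SOf p ↔ p.1 ≤ x ∧ p.2 ⇨ x = x := by
  simp [SOf, mem_Opn, Set.mem_Ici]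

lemma mem_SJoinP {G : Set (L × L)} {x : L} :
    x ∈ SJoinP G ↔ ∃ M, M ⊆ (⋃ p ∈ G, SOf p) ∧ sInf M = x := Iff.rfl

lemma sInf_mem_SOf {p : L × L} {M : Set L} (h : M ⊆ SOf p) : sInf M ∈ SOf p := by
  rw [mem_SOf]
  constructor
  · exact le_sInf fun x hx => (mem_SOf.1 (h hx)).1
  · refine le_antisymm (le_sInf fun x hx => ?_) le_himp
    exact le_trans (himp_le_himp_left (sInf_le hx)) (le_of_eq (mem_SOf.1 (h hx)).2)

lemma SOf_subset_SJoinP {G : Set (L × L)} {q : L × L} (h : q ∈ G) : SOf q ⊆ SJoinP G := by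
  intro x hx
  refine ⟨{x}, ?_, sInf_singleton⟩
  rintro y rfl
  exact Set.mem_iUnion₂.2 ⟨q, h, hx⟩

lemma SJoinP_subset_SOf {G : Set (L × L)} {p : L × L} (h : ∀ q ∈ G, SOf q ⊆ SOf p) :
    SJoinP G ⊆ SOf p := by
  rintro x ⟨M, hM, rfl⟩
  refine sInf_mem_SOf fun y hy => ?_
  obtain ⟨q, hq, hyq⟩ := Set.mem_iUnion₂.1 (hM hy)
  exact h q hq hyq

lemma sInf_mem_SJoinP {G : Set (L × L)} {M : Set L} (h : M ⊆ SJoinP G) :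
    sInf M ∈ SJoinP G := by
  have hc : ∀ x : M, ∃ N, N ⊆ (⋃ p ∈ G, SOf p) ∧ sInf N = (x : L) := fun x => h x.2
  choose N hN1 hN2 using hc
  refine ⟨⋃ x : M, N x, Set.iUnion_subset fun x => hN1 x, ?_⟩
  apply le_antisymm
  · refine le_sInf fun y hy => ?_
    refine le_trans (sInf_le_sInf (Set.subset_iUnion N (⟨y, hy⟩ : M))) ?_
    exact le_of_eq (hN2 ⟨y, hy⟩)
  · refine le_sInf fun y hy => ?_
    obtain ⟨x, hx⟩ := Set.mem_iUnion.1 hy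
    exact le_trans (le_trans (sInf_le x.2) (le_of_eq (hN2 x).symm)) (sInf_le hx)

lemma SJoinP_mono {F G : Set (L × L)} (h : F ⊆ G) : SJoinP F ⊆ SJoinP G := by
  rintro x ⟨M, hM, rfl⟩
  exact ⟨M, hM.trans (Set.iUnion₂_mono' fun p hp => ⟨p, h hp, le_rfl⟩), rfl⟩

lemma SJoinP_subset_SJoinP {F G : Set (L × L)} (h : ∀ q ∈ F, SOf q ⊆ SJoinP G) :
    SJoinP F ⊆ SJoinP G := by
  rintro x ⟨M, hM, rfl⟩
  refine sInf_mem_SJoinP fun y hy => ?_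
  obtain ⟨q, hq, hyq⟩ := Set.mem_iUnion₂.1 (hM hy)
  exact h q hq hyq

lemma lc_mem_LCset (p : L × L) : lc p ∈ LCset L := by
  constructor
  · exact le_sup_left
  · show ((p.2 ⇨ p.1) ⊔ p.2) ⇨ (p.2 ⇨ p.1) = p.2 ⇨ p.1
    rw [sup_himp_distrib, himp_self, top_inf_eq, himp_himp_self]

lemma mem_SOf_lc {p : L × L} {x : L} : x ∈ SOf (lc p) ↔ p.1 ≤ x ∧ p.2 ⇨ x = x := by
  rw [mem_SOf]
  show p.2 ⇨ p.1 ≤ x ∧ ((p.2 ⇨ p.1) ⊔ p.2) ⇨ x = x ↔ _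
  constructor
  · rintro ⟨h1, h2⟩
    have hx : p.1 ≤ x := le_trans le_himp h1
    refine ⟨hx, ?_⟩
    rw [sup_himp_distrib] at h2
    have h3 : (p.2 ⇨ x) ⊓ (p.2 ⇨ p.1) ≤ x := by
      rw [← himp_inf_distrib]
      exact le_trans (himp_le_himp_left inf_le_right) h1
    have h4 : p.2 ⇨ x ≤ (p.2 ⇨ p.1) ⇨ x := le_himp_iff.2 h3
    have h5 : p.2 ⇨ x ≤ x := by
      conv_rhs => rw [← h2]
      exact le_inf h4 le_rfl
    exact le_antisymm h5 le_himp
  · rintro ⟨h1, h2⟩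
    have h0 : p.2 ⇨ p.1 ≤ x := le_trans (himp_le_himp_left h1) (le_of_eq h2)
    refine ⟨h0, ?_⟩
    rw [sup_himp_distrib, h2, himp_eq_top_iff.2 h0, top_inf_eq]

lemma SOf_lc (p : L × L) : SOf (lc p) = Set.Ici p.1 ∩ Opn p.2 := by
  ext x
  rw [mem_SOf_lc]
  simp [mem_Opn, Set.mem_Ici]

lemma inf_himp_fix {a b x : L} : (a ⊓ b) ⇨ x = x ↔ (a ⇨ x = x ∧ b ⇨ x = x) := by
  constructor
  · intro h
    have h' : a ⇨ (b ⇨ x) = x := by rw [himp_himp]; exact h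
    constructor
    · refine le_antisymm ?_ le_himp
      calc a ⇨ x ≤ a ⇨ (b ⇨ x) := himp_le_himp_left le_himp
        _ = x := h'
    · refine le_antisymm ?_ le_himp
      calc b ⇨ x ≤ b ⇨ (a ⇨ x) := himp_le_himp_left le_himp
        _ = a ⇨ (b ⇨ x) := himp_left_comm' b a x
        _ = x := h'
  · rintro ⟨h1, h2⟩
    rw [← himp_himp, h2, h1]

lemma SOf_lcSup (p q : L × L) : SOf (lcSup p q) = SOf p ∩ SOf q := by
  ext x
  rw [lcSup]
  rw [Set.mem_inter_iff, mem_SOf_lc, mem_SOf, mem_SOf]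
  show p.1 ⊔ q.1 ≤ x ∧ (p.2 ⊓ q.2) ⇨ x = x ↔ _
  rw [sup_le_iff, inf_himp_fix]
  tauto

lemma LCle_refl (p : L × L) : LCle p p := ⟨le_rfl, le_sup_right⟩

lemma LCle_antisymm {p q : L × L} (hp : p ∈ LCset L) (hq : q ∈ LCset L)
    (h1 : LCle p q) (h2 : LCle q p) : p = q := by
  have e1 : p.1 = q.1 := le_antisymm h1.1 h2.1
  have e2 : p.2 = q.2 := by
    refine le_antisymm ?_ ?_
    · exact le_trans h2.2 (by rw [e1]; exact sup_le hq.1 le_rfl)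
    · exact le_trans h1.2 (by rw [← e1]; exact sup_le hp.1 le_rfl)
  exact Prod.ext e1 e2

lemma SOf_subset_of_LCle {p q : L × L} (h : LCle q p) : SOf p ⊆ SOf q := by
  intro x hx
  obtain ⟨hx1, hx2⟩ := mem_SOf.1 hx
  rw [mem_SOf]
  refine ⟨le_trans h.1 hx1, ?_⟩
  refine le_antisymm ?_ le_himp
  calc q.2 ⇨ x = ⊤ ⊓ (q.2 ⇨ x) := (top_inf_eq _).symm
    _ = (p.1 ⇨ x) ⊓ (q.2 ⇨ x) := by rw [himp_eq_top_iff.2 hx1]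
    _ = (p.1 ⊔ q.2) ⇨ x := (sup_himp_distrib _ _ _).symm
    _ ≤ p.2 ⇨ x := himp_le_himp_right h.2
    _ = x := hx2

lemma LCle_of_SOf_subset {p q : L × L} (hp : p ∈ LCset L) (h : SOf p ⊆ SOf q) :
    LCle q p := by
  have h1 : p.1 ∈ SOf p := mem_SOf.2 ⟨le_rfl, hp.2⟩
  have hq1 : q.1 ≤ p.1 := (mem_SOf.1 (h h1)).1
  set x := p.2 ⇨ (p.1 ⊔ q.2) with hxdef
  have hxS : x ∈ SOf p := mem_SOf.2 ⟨le_trans le_sup_left le_himp, himp_himp_self _ _⟩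
  have hqx : q.2 ⇨ x = x := (mem_SOf.1 (h hxS)).2
  have hq2x : q.2 ≤ x := le_trans le_sup_right le_himp
  have hp2x : p.2 ≤ x := by
    rw [← hqx]
    exact le_himp_iff.2 (le_trans inf_le_right hq2x)
  have : p.2 ≤ p.1 ⊔ q.2 := by
    calc p.2 = p.2 ⊓ x := (inf_eq_left.2 hp2x).symm
      _ = p.2 ⊓ (p.1 ⊔ q.2) := inf_himp p.2 _
      _ ≤ p.1 ⊔ q.2 := inf_le_right
  exact ⟨hq1, this⟩

lemma lcIsGLB_of {F : Set (L × L)} {m : L × L} (hm : m ∈ LCset L) (hF : F ⊆ LCset L)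
    (hS : SJoinP F = SOf m) : lcIsGLB F m := by
  refine ⟨hm, ?_, ?_⟩
  · intro p hp
    exact LCle_of_SOf_subset (hF hp) (hS ▸ SOf_subset_SJoinP hp)
  · intro q hq hlb
    refine LCle_of_SOf_subset hm ?_
    rw [← hS]
    exact SJoinP_subset_SOf fun r hr => SOf_subset_of_LCle (hlb r hr)

lemma lcIsGLB_unique {F : Set (L × L)} {m m' : L × L} (h1 : lcIsGLB F m)
    (h2 : lcIsGLB F m') : m = m' :=
  LCle_antisymm h1.1 h2.1 (h2.2.2 m h1.1 h1.2.1) (h1.2.2 m' h2.1 h2.2.1)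

lemma SJoinP_eq_SOf_of_glb {F : Set (L × L)} {m : L × L} {x y : L} (hFL : F ⊆ LCset L)
    (hxy : SJoinP F = Set.Ici x ∩ Opn y) (hglb : lcIsGLB F m) : SJoinP F = SOf m := by
  have h1 : SJoinP F = SOf (lc (x, y)) := by rw [SOf_lc]; exact hxy
  have h2 : lcIsGLB F (lc (x, y)) := lcIsGLB_of (lc_mem_LCset _) hFL h1
  rw [lcIsGLB_unique hglb h2]
  exact h1

/-- Locally closed sublocales are linear: key distributivity. -/
lemma SOf_inf_SJoinP (p : L × L) (G : Set (L × L)) :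
    SOf p ∩ SJoinP G = SJoinP ((fun q => lcSup p q) '' G) := by
  apply Set.Subset.antisymm
  · rintro x ⟨hxp, M, hM, rfl⟩
    obtain ⟨hx1, hx2⟩ := mem_SOf.1 hxp
    have hc : ∀ m : M, ∃ q, q ∈ G ∧ (m : L) ∈ SOf q := by
      intro m
      obtain ⟨q, hq, hmq⟩ := Set.mem_iUnion₂.1 (hM m.2)
      exact ⟨q, hq, hmq⟩
    choose qf hqf1 hqf2 using hc
    set v : M → L := fun m => (qf m).2 ⇨ (p.2 ⇨ (p.1 ⊔ (m : L))) with hvdef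
    set c1 : M → L := fun m => p.1 ⇨ (m : L) with hc1def
    set c2 : M → L := fun m => p.1 ⊔ (m : L) ⊔ p.2 with hc2def
    -- pointwise decomposition
    have key : ∀ m : M, (m : L) = v m ⊓ (c1 m ⊓ c2 m) := by
      intro m
      obtain ⟨hqm1, hqm2⟩ := mem_SOf.1 (hqf2 m)
      refine le_antisymm ?_ ?_
      · refine le_inf (le_trans le_sup_right (le_trans le_himp le_himp)) (le_inf le_himp ?_)
        exact le_trans le_sup_right le_sup_left
      · have hsplit : v m ⊓ (c1 m ⊓ c2 m) =
            ((v m ⊓ c1 m) ⊓ (p.1 ⊔ (m : L))) ⊔ ((v m ⊓ c1 m) ⊓ p.2) := by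
          rw [← inf_sup_left, ← inf_assoc]
        rw [hsplit]
        refine sup_le ?_ ?_
        · rw [inf_sup_left]
          refine sup_le ?_ inf_le_right
          calc v m ⊓ c1 m ⊓ p.1 ≤ p.1 ⊓ (p.1 ⇨ (m : L)) := by
                rw [inf_comm]
                exact inf_le_inf_left _ inf_le_right
            _ = p.1 ⊓ (m : L) := inf_himp _ _
            _ ≤ (m : L) := inf_le_right
        · -- t := v ⊓ c1 ⊓ p.2 ≤ m
          have ht : v m ⊓ c1 m ⊓ p.2 ⊓ (qf m).2 ≤ (m : L) := by
            have step1 : v m ⊓ (qf m).2 ≤ p.2 ⇨ (p.1 ⊔ (m : L)) := by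
              rw [inf_comm, hvdef]
              exact le_of_eq_of_le (inf_himp _ _) inf_le_right
            calc v m ⊓ c1 m ⊓ p.2 ⊓ (qf m).2 ≤ (v m ⊓ (qf m).2) ⊓ p.2 ⊓ c1 m := by
                  refine le_inf (le_inf ?_ ?_) ?_
                  · exact le_inf (le_trans inf_le_left (le_trans inf_le_left inf_le_left)) inf_le_right
                  · exact le_trans inf_le_left inf_le_right
                  · exact le_trans inf_le_left (le_trans inf_le_left inf_le_right)
              _ ≤ ((p.2 ⇨ (p.1 ⊔ (m : L))) ⊓ p.2) ⊓ c1 m :=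
                  inf_le_inf_right _ (inf_le_inf_right _ step1)
              _ = (p.2 ⊓ (p.1 ⊔ (m : L))) ⊓ c1 m := by rw [inf_comm (p.2 ⇨ _) p.2, inf_himp]
              _ ≤ (p.1 ⊔ (m : L)) ⊓ c1 m := inf_le_inf_right _ inf_le_right
              _ = (p.1 ⊓ c1 m) ⊔ ((m : L) ⊓ c1 m) := by rw [inf_sup_right]
              _ ≤ (m : L) := by
                  refine sup_le ?_ inf_le_left
                  exact le_of_eq_of_le (inf_himp _ _) inf_le_right
          calc v m ⊓ c1 m ⊓ p.2 ≤ (qf m).2 ⇨ (v m ⊓ c1 m ⊓ p.2 ⊓ (qf m).2) :=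
                le_himp_iff.2 le_rfl
            _ ≤ (qf m).2 ⇨ (m : L) := himp_le_himp_left ht
            _ = (m : L) := hqm2
    have hbv : ∀ m : M, p.2 ⇨ v m = v m := by
      intro m
      rw [hvdef]
      show p.2 ⇨ ((qf m).2 ⇨ (p.2 ⇨ (p.1 ⊔ (m : L)))) = _
      rw [himp_left_comm' p.2, himp_himp_self]
    set V := ⨅ m : M, v m with hVdef
    set C1 := ⨅ m : M, c1 m with hC1def
    set C2 := ⨅ m : M, c2 m with hC2def
    have hx' : sInf M = V ⊓ (C1 ⊓ C2) := by
      rw [hVdef, hC1def, hC2def, ← iInf_inf_eq, ← iInf_inf_eq, sInf_eq_iInf']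
      exact iInf_congr key
    have hbV : p.2 ⇨ V = V := by
      refine le_antisymm (le_iInf fun m => ?_) le_himp
      exact le_trans (himp_le_himp_left (iInf_le _ m)) (le_of_eq (hbv m))
    have haC1 : p.1 ⇨ C1 = C1 := by
      refine le_antisymm (le_iInf fun m => ?_) le_himp
      exact le_trans (himp_le_himp_left (iInf_le _ m)) (le_of_eq (himp_himp_self _ _))
    have hxC1 : sInf M ≤ C1 := le_iInf fun m => le_trans (sInf_le m.2) le_himp
    have hdtop : p.2 ⇨ C1 = ⊤ := by
      have had : p.1 ⇨ (p.2 ⇨ C1) = p.2 ⇨ C1 := by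
        rw [himp_left_comm' p.1, haC1]
      have hpd : p.1 ≤ p.2 ⇨ C1 := le_trans hx1 (le_trans hxC1 le_himp)
      rw [← had, himp_eq_top_iff.2 hpd]
    have hbC2 : p.2 ⇨ C2 = ⊤ := himp_eq_top_iff.2 (le_iInf fun m => le_sup_right)
    have hxV : sInf M = V := by
      conv_lhs => rw [← hx2, hx', himp_inf_distrib, himp_inf_distrib, hbV, hdtop, hbC2,
        inf_top_eq, inf_top_eq]
    refine ⟨Set.range v, ?_, by rw [sInf_range]; exact hxV.symm⟩
    rintro y ⟨m, rfl⟩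
    refine Set.mem_iUnion₂.2 ⟨lcSup p (qf m), Set.mem_image_of_mem _ (hqf1 m), ?_⟩
    show v m ∈ SOf (lcSup p (qf m))
    rw [SOf_lcSup]
    obtain ⟨hqm1, hqm2⟩ := mem_SOf.1 (hqf2 m)
    constructor
    · refine mem_SOf.2 ⟨?_, hbv m⟩
      exact le_trans le_sup_left (le_trans le_himp le_himp)
    · refine mem_SOf.2 ⟨?_, ?_⟩
      · exact le_trans hqm1 (le_trans le_sup_right (le_trans le_himp le_himp))
      · rw [hvdef]
        exact himp_himp_self _ _
  · refine Set.subset_inter ?_ ?_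
    · refine SJoinP_subset_SOf ?_
      rintro r ⟨q, hq, rfl⟩
      rw [SOf_lcSup]
      exact Set.inter_subset_left
    · refine SJoinP_subset_SJoinP ?_
      rintro r ⟨q, hq, rfl⟩
      rw [SOf_lcSup]
      exact Set.Subset.trans Set.inter_subset_right (SOf_subset_SJoinP hq)

lemma SOf_subset_SJoinP_of_admissible {F : Set (L × L)} {m : L × L}
    (h : lcAdmissible F m) : SOf m ⊆ SJoinP F := by
  intro x hx
  obtain ⟨hx1, hx2⟩ := mem_SOf.1 hx
  have ht : ((x, ⊤) : L × L) ∈ LCset L := ⟨le_top, top_himp⟩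
  have hglb := h.2 (x, ⊤) ht
  set v : L × L → L := fun q => q.2 ⇨ (x ⊔ q.1) with hvdef
  set z := ⨅ q : F, v q with hzdef
  have hz : ((z, ⊤) : L × L) ∈ LCset L := ⟨le_top, top_himp⟩
  have hfst : ∀ q : L × L, (lcSup (x, ⊤) q).1 = v q := by
    intro q
    show (((x, ⊤) : L × L).2 ⊓ q.2) ⇨ (((x, ⊤) : L × L).1 ⊔ q.1) = _
    rw [hvdef]
    show (⊤ ⊓ q.2) ⇨ (x ⊔ q.1) = q.2 ⇨ (x ⊔ q.1)
    rw [top_inf_eq]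
  have hlb : ∀ r ∈ (fun q => lcSup (x, ⊤) q) '' F, LCle (z, ⊤) r := by
    rintro r ⟨q, hq, rfl⟩
    constructor
    · show z ≤ (lcSup (x, ⊤) q).1
      rw [hfst q]
      exact iInf_le (fun q : F => v q) ⟨q, hq⟩
    · exact le_sup_of_le_right le_top
  have hconc := hglb.2.2 (z, ⊤) hz hlb
  have hm1 : (lcSup (x, ⊤) m).1 = x := by
    rw [hfst m, hvdef]
    show m.2 ⇨ (x ⊔ m.1) = x
    rw [sup_eq_left.2 hx1, hx2]
  have hzx : z ≤ x := by
    have := hconc.1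
    rw [hm1] at this
    exact this
  have hxv : ∀ q : F, x ≤ v (q : L × L) := fun q => le_trans le_sup_left le_himp
  refine ⟨Set.range (fun q : F => v (q : L × L)), ?_, ?_⟩
  · rintro y ⟨q, rfl⟩
    refine Set.mem_iUnion₂.2 ⟨(q : L × L), q.2, ?_⟩
    show v (q : L × L) ∈ SOf (q : L × L)
    refine mem_SOf.2 ⟨le_trans le_sup_right le_himp, ?_⟩
    rw [hvdef]
    exact himp_himp_self _ _
  · rw [sInf_range]
    exact le_antisymm hzx (le_iInf hxv)

theorem stmt_19 (U : Set (L × L)) (hU1 : U ⊆ LCset L) (hU2 : U.Nonempty)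
    (hU3 : ∀ p ∈ U, ∀ q ∈ LCset L, LCle p q → q ∈ U) :
    {p | p ∈ LCset L ∧ Set.Ici p.1 ∩ Opn p.2 ⊆ SJoinP U} =
        {m | ∃ F ⊆ U, (∃ x y : L, SJoinP F = Set.Ici x ∩ Opn y) ∧ lcIsGLB F m} ∧
      {m | ∃ F ⊆ U, (∃ x y : L, SJoinP F = Set.Ici x ∩ Opn y) ∧ lcIsGLB F m} =
        ⋂₀ {W | lcAUS L W ∧ U ⊆ W} := by
  have hpart1 : {p : L × L | p ∈ LCset L ∧ Set.Ici p.1 ∩ Opn p.2 ⊆ SJoinP U} =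
      {m | ∃ F ⊆ U, (∃ x y : L, SJoinP F = Set.Ici x ∩ Opn y) ∧ lcIsGLB F m} := by
    ext p
    simp only [Set.mem_setOf_eq]
    constructor
    · rintro ⟨hp, hsub⟩
      have hsub' : SOf p ⊆ SJoinP U := hsub
      have himg : (fun q => lcSup p q) '' U ⊆ U := by
        rintro r ⟨q, hq, rfl⟩
        refine hU3 q hq _ (lc_mem_LCset _) ?_
        refine LCle_of_SOf_subset (lc_mem_LCset _) ?_
        rw [SOf_lcSup]
        exact Set.inter_subset_right
      have hSeq : SJoinP ((fun q => lcSup p q) '' U) = SOf p := by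
        rw [← SOf_inf_SJoinP, Set.inter_eq_left.2 hsub']
      exact ⟨_, himg, ⟨p.1, p.2, hSeq⟩, lcIsGLB_of hp (himg.trans hU1) hSeq⟩
    · rintro ⟨F, hFU, ⟨x, y, hxy⟩, hglb⟩
      have hFL : F ⊆ LCset L := hFU.trans hU1
      have hSm : SJoinP F = SOf p := SJoinP_eq_SOf_of_glb hFL hxy hglb
      refine ⟨hglb.1, ?_⟩
      show SOf p ⊆ SJoinP U
      rw [← hSm]
      exact SJoinP_mono hFU
  refine ⟨hpart1, ?_⟩
  apply Set.Subset.antisymm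
  · intro m hm
    refine Set.mem_sInter.2 ?_
    rintro W ⟨hW, hUW⟩
    obtain ⟨F, hFU, ⟨x, y, hxy⟩, hglb⟩ := hm
    have hFL : F ⊆ LCset L := hFU.trans hU1
    have hSm : SJoinP F = SOf m := SJoinP_eq_SOf_of_glb hFL hxy hglb
    have hadm : lcAdmissible F m := by
      refine ⟨hglb, fun b hb => ?_⟩
      refine lcIsGLB_of (lc_mem_LCset _) ?_ ?_
      · rintro r ⟨q, hq, rfl⟩
        exact lc_mem_LCset _
      · rw [SOf_lcSup, ← hSm]
        exact (SOf_inf_SJoinP b F).symm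
    exact hW.2.2.2 F (hFU.trans hUW) m hadm
  · refine Set.sInter_subset_of_mem ?_
    have hUM : U ⊆ {m | ∃ F ⊆ U, (∃ x y : L, SJoinP F = Set.Ici x ∩ Opn y) ∧ lcIsGLB F m} := by
      rw [← hpart1]
      intro p hp
      exact ⟨hU1 hp, SOf_subset_SJoinP hp⟩
    refine ⟨⟨?_, ?_, ?_, ?_⟩, hUM⟩
    · obtain ⟨p, hp⟩ := hU2
      exact ⟨p, hUM hp⟩
    · rw [← hpart1]
      intro p hp
      exact hp.1
    · rw [← hpart1]
      intro p hp q hq hle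
      exact ⟨hq, (SOf_subset_of_LCle hle).trans hp.2⟩
    · rw [← hpart1]
      intro F hF m hadm
      refine ⟨hadm.1.1, ?_⟩
      show SOf m ⊆ SJoinP U
      refine (SOf_subset_SJoinP_of_admissible hadm).trans ?_
      exact SJoinP_subset_SJoinP fun q hq => (hF hq).2
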